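/- arXiv:1504.07215 — 4 statements merged into one kernel-verified Lean document; each statement's English description precedes it below -/
import Mathlib

section
/- Let X be a connected complex manifold and α : X → ℝ a smooth plurisubharmonic function with minimum value 0. Then the function β = α² is plurisubharmonic, has minimum value 0, and at every point p where the complex Hessian (Levi form) of β vanishes, the differential dβ(p) also vanishes. -/
lemma fderiv_sq' {E : Type*} [NormedAddCommGroup E] [NormedSpace ℝ E]
    (α : E → ℝ) {p : E} (hd : DifferentiableAt ℝ α p) :
    fderiv ℝ (fun x => α x ^ 2) p = (2 * α p) • fderiv ℝ α p := by
  have h : (fun x => α x ^ 2) = fun x => α x * α x := by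
    funext x; ring
  rw [h, HasFDerivAt.fderiv (f := fun x => α x * α x) (hd.hasFDerivAt.mul hd.hasFDerivAt)]
  ext u
  simp [smul_eq_mul]
  ring

lemma second_deriv' {E : Type*} [NormedAddCommGroup E] [NormedSpace ℝ E]
    (U : Set E) (hU : IsOpen U) (α : E → ℝ) (hα : ContDiffOn ℝ (⊤ : ℕ∞) α U)
    {p : E} (hp : p ∈ U) (w u : E) :
    fderiv ℝ (fun q => fderiv ℝ (fun x => α x ^ 2) q w) p u
      = 2 * fderiv ℝ α p u * fderiv ℝ α p w
        + 2 * α p * fderiv ℝ (fun q => fderiv ℝ α q w) p u := by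
  have hDsm : ContDiffOn ℝ (⊤ : ℕ∞) (fderiv ℝ α) U := hα.fderiv_of_isOpen hU (by simp)
  have hmem := hU.mem_nhds hp
  have heq : (fun q => fderiv ℝ (fun x => α x ^ 2) q w)
      =ᶠ[nhds p] (fun q => (2 * α q) * fderiv ℝ α q w) := by
    filter_upwards [hmem] with q hq
    have hd : DifferentiableAt ℝ α q := (hα.contDiffAt (hU.mem_nhds hq)).differentiableAt (by simp)
    rw [fderiv_sq' α hd]
    simp
  rw [heq.fderiv_eq]
  have hdα : DifferentiableAt ℝ α p := (hα.contDiffAt hmem).differentiableAt (by simp)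
  have hdD : DifferentiableAt ℝ (fderiv ℝ α) p := (hDsm.contDiffAt hmem).differentiableAt (by simp)
  have hdh : DifferentiableAt ℝ (fun q => fderiv ℝ α q w) p :=
    hdD.clm_apply (differentiableAt_const w)
  have h1 : HasFDerivAt (fun q => 2 * α q) ((2:ℝ) • fderiv ℝ α p) p :=
    hdα.hasFDerivAt.const_mul 2
  have h2 := hdh.hasFDerivAt
  have := HasFDerivAt.fderiv (f := fun q => 2 * α q * fderiv ℝ α q w) (h1.mul h2)
  rw [this]
  simp [smul_eq_mul]
  ring

/-- The Levi form of a real-valued function on a complex normed space, evaluated as a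
quadratic form: `levi f p v = D²f(p)(v,v) + D²f(p)(I•v, I•v)`, which (up to a factor `4`)
is the complex Hessian `∂∂̄f(p)(v,v̄)`. -/
noncomputable def leviForm {E : Type*} [NormedAddCommGroup E] [NormedSpace ℂ E]
    (f : E → ℝ) (p v : E) : ℝ :=
  fderiv ℝ (fun q => fderiv ℝ f q v) p v
    + fderiv ℝ (fun q => fderiv ℝ f q (Complex.I • v)) p (Complex.I • v)

lemma levi_sq' {E : Type*} [NormedAddCommGroup E] [NormedSpace ℂ E]
    (U : Set E) (hU : IsOpen U) (α : E → ℝ) (hα : ContDiffOn ℝ (⊤ : ℕ∞) α U)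
    {p : E} (hp : p ∈ U) (v : E) :
    leviForm (fun q => (α q) ^ 2) p v
      = 2 * (fderiv ℝ α p v) ^ 2 + 2 * (fderiv ℝ α p (Complex.I • v)) ^ 2
        + 2 * α p * leviForm α p v := by
  unfold leviForm
  rw [second_deriv' U hU α hα hp v v, second_deriv' U hU α hα hp (Complex.I • v) (Complex.I • v)]
  ring

/-- If `α` is a smooth plurisubharmonic function with minimum value `0`
on a connected open set `U` of a complex normed space, then `β = α²` is plurisubharmonic,
has minimum value `0`, and wherever the Levi form of `β` vanishes, so does `dβ`. -/
theorem stmt_0 {E : Type*} [NormedAddCommGroup E] [NormedSpace ℂ E]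
    (U : Set E) (hU : IsOpen U) (hUc : IsConnected U)
    (α : E → ℝ) (hα : ContDiffOn ℝ (⊤ : ℕ∞) α U)
    (hpsh : ∀ p ∈ U, ∀ v : E, 0 ≤ leviForm α p v)
    (hmin0 : ∀ p ∈ U, 0 ≤ α p) (hmin : ∃ p ∈ U, α p = 0) :
    (∀ p ∈ U, ∀ v : E, 0 ≤ leviForm (fun q => (α q) ^ 2) p v) ∧
    (∀ p ∈ U, 0 ≤ (α p) ^ 2) ∧ (∃ p ∈ U, (α p) ^ 2 = 0) ∧
    (∀ p ∈ U, (∀ v : E, leviForm (fun q => (α q) ^ 2) p v = 0) →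
      fderiv ℝ (fun q => (α q) ^ 2) p = 0) := by
  refine ⟨fun p hp v => ?_, fun p hp => sq_nonneg _, ?_, fun p hp h0 => ?_⟩
  · rw [levi_sq' U hU α hα hp v]
    have := hpsh p hp v
    have := hmin0 p hp
    positivity
  · obtain ⟨p, hp, hαp⟩ := hmin
    exact ⟨p, hp, by rw [hαp]; ring⟩
  · have hdα : DifferentiableAt ℝ α p :=
      (hα.contDiffAt (hU.mem_nhds hp)).differentiableAt (by simp)
    have hα0 : ∀ v : E, fderiv ℝ α p v = 0 := by
      intro v
      have h := h0 v
      rw [levi_sq' U hU α hα hp v] at h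
      have h1 := hpsh p hp v
      have h2 := hmin0 p hp
      nlinarith [sq_nonneg (fderiv ℝ α p v), sq_nonneg (fderiv ℝ α p (Complex.I • v))]
    rw [fderiv_sq' α hdα]
    ext v
    simp [hα0 v]
end

section
/- Let H be a 2×2 Hermitian matrix over ℂ with det H = 0, and let v ∈ ℂ² be a nonzero vector such that ⟨v, (adj H) v⟩ = 0, where adj H denotes the adjugate matrix of H. Then there exists a real number μ such that H = μ · v v*, where v v* is the rank-one Hermitian matrix with entries v_i \overline{v_j}. -/
open Matrix

private lemma mulconj_zero {z : ℂ} (h : z * (starRingEnd ℂ) z = 0) : z = 0 := by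
  have h2 : (Complex.normSq z : ℂ) = 0 := by rw [← Complex.mul_conj]; exact h
  exact Complex.normSq_eq_zero.mp (by exact_mod_cast h2)

/-- A `2×2` Hermitian matrix `H` with `det H = 0` such that
`⟨v, (adj H) v⟩ = 0` for some nonzero vector `v` is a real multiple of the
rank-one Hermitian matrix `v v*`. -/
theorem stmt_1 (H : Matrix (Fin 2) (Fin 2) ℂ) (hH : H.IsHermitian)
    (hdet : H.det = 0) (v : Fin 2 → ℂ) (hv : v ≠ 0)
    (horth : star v ⬝ᵥ (H.adjugate *ᵥ v) = 0) :
    ∃ μ : ℝ, H = (μ : ℂ) • Matrix.vecMulVec v (star v) := by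
  rw [det_fin_two] at hdet
  rw [adjugate_fin_two] at horth
  simp [dotProduct, mulVec, Fin.sum_univ_two] at horth
  have ha : (starRingEnd ℂ) (H 0 0) = H 0 0 := hH.apply 0 0
  have hd : (starRingEnd ℂ) (H 1 1) = H 1 1 := hH.apply 1 1
  have hb : H 1 0 = (starRingEnd ℂ) (H 0 1) := (hH.apply 1 0).symm
  rw [hb] at hdet horth
  by_cases hA : H 0 0 = 0
  · -- first diagonal entry zero forces off-diagonal zero
    have hb0 : H 0 1 = 0 := by
      apply mulconj_zero
      linear_combination -hdet + H 1 1 * hA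
    have hcb0 : (starRingEnd ℂ) (H 0 1) = 0 := by rw [hb0]; simp
    by_cases hD : H 1 1 = 0
    · refine ⟨0, ?_⟩
      ext i j
      fin_cases i <;> fin_cases j <;>
        simp [hA, hb0, hD, hb, hcb0]
    · -- H = diag(0, d), and then v 0 = 0
      have hv0 : v 0 = 0 := by
        apply mulconj_zero
        have : H 1 1 * (v 0 * (starRingEnd ℂ) (v 0)) = 0 := by
          linear_combination horth - ((starRingEnd ℂ) (v 1) * v 1) * hA
            + ((starRingEnd ℂ) (v 0) * v 1) * hb0 + ((starRingEnd ℂ) (v 1) * v 0) * hcb0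
        rcases mul_eq_zero.mp this with h | h
        · exact absurd h hD
        · exact h
      have hv1 : v 1 ≠ 0 := by
        intro h1
        apply hv
        funext i
        fin_cases i <;> simp [hv0, h1]
      have hdre : ((H 1 1).re : ℂ) = H 1 1 := Complex.conj_eq_iff_re.mp hd
      have hn : Complex.normSq (v 1) ≠ 0 := fun h => hv1 (Complex.normSq_eq_zero.mp h)
      refine ⟨(H 1 1).re / Complex.normSq (v 1), ?_⟩
      ext i j
      fin_cases i <;> fin_cases j <;>
        simp only [Matrix.smul_apply, vecMulVec_apply, Pi.star_apply, RCLike.star_def,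
          smul_eq_mul, Complex.ofReal_div]
      · simp [hA, hv0]
      · simp [hb0, hv0]
      · simp [hb, hcb0, hv0]
      · rw [← Complex.mul_conj (v 1), hdre]
        have hcv1n : (starRingEnd ℂ) (v 1) ≠ 0 := by simpa using hv1
        field_simp
        rfl
    -- done with hA = 0 case
  · -- main case : H 0 0 ≠ 0
    have key : ((starRingEnd ℂ) (H 0 1) * v 0 - H 0 0 * v 1) *
        (H 0 1 * (starRingEnd ℂ) (v 0) - H 0 0 * (starRingEnd ℂ) (v 1)) = 0 := by
      linear_combination (H 0 0) * horth - (v 0 * (starRingEnd ℂ) (v 0)) * hdet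
    have key2 : (starRingEnd ℂ) (H 0 1) * v 0 - H 0 0 * v 1 = 0 := by
      apply mulconj_zero
      have hc : (starRingEnd ℂ) ((starRingEnd ℂ) (H 0 1) * v 0 - H 0 0 * v 1)
          = H 0 1 * (starRingEnd ℂ) (v 0) - H 0 0 * (starRingEnd ℂ) (v 1) := by
        simp [map_sub, _root_.map_mul, ha]
      rw [hc]; exact key
    have hv1 : H 0 0 * v 1 = (starRingEnd ℂ) (H 0 1) * v 0 := (sub_eq_zero.mp key2).symm
    have hcv1 : H 0 0 * (starRingEnd ℂ) (v 1) = H 0 1 * (starRingEnd ℂ) (v 0) := by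
      have := congrArg (starRingEnd ℂ) hv1
      simpa [_root_.map_mul, ha] using this
    have hv0 : v 0 ≠ 0 := by
      intro h0
      have h1 : v 1 = 0 := by
        have : H 0 0 * v 1 = 0 := by rw [hv1, h0, mul_zero]
        exact (mul_eq_zero.mp this).resolve_left hA
      apply hv; funext i; fin_cases i <;> simp [h0, h1]
    have hcv0 : (starRingEnd ℂ) (v 0) ≠ 0 := by simpa using hv0
    have hare : ((H 0 0).re : ℂ) = H 0 0 := Complex.conj_eq_iff_re.mp ha
    have h11 : H 1 1 * (v 0 * (starRingEnd ℂ) (v 0)) = H 0 0 * (v 1 * (starRingEnd ℂ) (v 1)) := by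
      apply mul_left_cancel₀ hA
      linear_combination (v 0 * (starRingEnd ℂ) (v 0)) * hdet
        - (H 0 0 * v 1) * hcv1 - (H 0 1 * (starRingEnd ℂ) (v 0)) * hv1
    refine ⟨(H 0 0).re / Complex.normSq (v 0), ?_⟩
    ext i j
    fin_cases i <;> fin_cases j <;>
      simp only [Fin.mk_zero, Fin.mk_one, Fin.isValue, Matrix.smul_apply, vecMulVec_apply,
        Pi.star_apply, RCLike.star_def, smul_eq_mul, Complex.ofReal_div] <;>
      rw [← Complex.mul_conj (v 0), hare]
    · field_simp
    · field_simp
      linear_combination -hcv1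
    · rw [hb]
      field_simp
      linear_combination -hv1
    · field_simp
      linear_combination h11
end

section
/- Let M be a smooth manifold and f, g : M → ℝ be C¹ functions such that dg(p) ≠ 0 for all p ∈ M and df ∧ dg = 0 identically on M. Then for every p ∈ M there exist an open neighborhood V of p, an open interval I ⊆ ℝ containing g(p), and a C¹ function m : I → ℝ such that f = m ∘ g on V. -/
open Set Filter Metric

set_option maxHeartbeats 1000000 in
/-- If `f, g` are `C¹` real functions on a normed space with
`dg(p) ≠ 0` everywhere and `df ∧ dg = 0` identically (the differentials are everywhere
linearly dependent), then locally `f` factors as `f = m ∘ g` with `m` a `C¹` function on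
an open interval around `g(p)`. -/
theorem stmt_10 {E : Type*} [NormedAddCommGroup E] [NormedSpace ℝ E]
    (f g : E → ℝ) (hf : ContDiff ℝ 1 f) (hg : ContDiff ℝ 1 g)
    (hdg : ∀ p : E, fderiv ℝ g p ≠ 0)
    (hwedge : ∀ p : E, ∀ u w : E,
      fderiv ℝ f p u * fderiv ℝ g p w = fderiv ℝ f p w * fderiv ℝ g p u) :
    ∀ p : E, ∃ V ∈ nhds p, ∃ I : Set ℝ, IsOpen I ∧ I.OrdConnected ∧ g p ∈ I ∧
      ∃ m : ℝ → ℝ, ContDiffOn ℝ 1 m I ∧ ∀ q ∈ V, f q = m (g q) := by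
  classical
  intro p
  have hfd : Differentiable ℝ f := hf.differentiable one_ne_zero
  have hgd : Differentiable ℝ g := hg.differentiable one_ne_zero
  have hgc : Continuous (fderiv ℝ g) :=
    ((contDiff_succ_iff_fderiv (𝕜 := ℝ) (f := g) (n := 0)).mp
      (by norm_num; exact hg)).2.2.continuous
  have hfc : Continuous (fderiv ℝ f) :=
    ((contDiff_succ_iff_fderiv (𝕜 := ℝ) (f := f) (n := 0)).mp
      (by norm_num; exact hf)).2.2.continuous
  -- choose `u` with `dg(p) u = 1`
  obtain ⟨u₀, hu₀⟩ : ∃ u₀, fderiv ℝ g p u₀ ≠ 0 := by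
    by_contra h
    push_neg at h
    exact hdg p (ContinuousLinearMap.ext fun w => by simpa using h w)
  set u : E := (fderiv ℝ g p u₀)⁻¹ • u₀ with hu_def
  have hu : fderiv ℝ g p u = 1 := by
    rw [hu_def, map_smul, smul_eq_mul]; field_simp
  -- constants
  set Kg : ℝ := ‖fderiv ℝ g p‖ + 1 with hKg_def
  have hKg1 : (1 : ℝ) ≤ Kg := by
    have := norm_nonneg (fderiv ℝ g p); simp only [hKg_def]; linarith
  have hKg0 : (0 : ℝ) < Kg := lt_of_lt_of_le one_pos hKg1
  -- a ball on which the derivative of `g` is controlled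
  obtain ⟨R, hR0, hRball⟩ :
      ∃ R > 0, ∀ x ∈ ball p R, 1/2 < fderiv ℝ g x u ∧ ‖fderiv ℝ g x‖ < Kg := by
    have hopen : IsOpen {x : E | 1/2 < fderiv ℝ g x u ∧ ‖fderiv ℝ g x‖ < Kg} := by
      apply IsOpen.inter
      · exact isOpen_lt continuous_const (hgc.clm_apply continuous_const)
      · exact isOpen_lt hgc.norm continuous_const
    have hp : p ∈ {x : E | 1/2 < fderiv ℝ g x u ∧ ‖fderiv ℝ g x‖ < Kg} := by
      constructor
      · rw [hu]; norm_num
      · simp only [hKg_def]; linarith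
    rcases Metric.isOpen_iff.1 hopen p hp with ⟨R, hR0, hR⟩
    exact ⟨R, hR0, fun x hx => hR hx⟩
  have hb1 : ∀ x ∈ ball p R, 1/2 < fderiv ℝ g x u := fun x hx => (hRball x hx).1
  have hb1' : ∀ x ∈ ball p R, fderiv ℝ g x u ≠ 0 := fun x hx =>
    ne_of_gt (lt_trans (by norm_num) (hb1 x hx))
  have hb2 : ∀ x ∈ ball p R, ‖fderiv ℝ g x‖ < Kg := fun x hx => (hRball x hx).2
  -- small radius δ and height T
  set δ : ℝ := R / (2 + (20 * Kg + 1) * ‖u‖) / 2 with hδ_def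
  have hden : (0:ℝ) < 2 + (20 * Kg + 1) * ‖u‖ := by positivity
  have hδ0 : 0 < δ := by positivity
  set T : ℝ := (20 * Kg + 1) * δ with hT_def
  have hT0 : 0 < T := by positivity
  have hTR : 2 * δ + T * ‖u‖ < R := by
    have h1 : δ * (2 + (20 * Kg + 1) * ‖u‖) = R / 2 := by
      rw [hδ_def]; field_simp
    have : 2 * δ + T * ‖u‖ = δ * (2 + (20 * Kg + 1) * ‖u‖) := by rw [hT_def]; ring
    rw [this, h1]; linarith
  have hδR : δ < R := by
    nlinarith [mul_nonneg (le_of_lt hT0) (norm_nonneg u)]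
  -- membership in the ball
  have hmem : ∀ (x : E) (t : ℝ), ‖x - p‖ ≤ 2 * δ → |t| ≤ T → x + t • u ∈ ball p R := by
    intro x t hx ht
    rw [mem_ball_iff_norm]
    have : x + t • u - p = (x - p) + t • u := by abel
    rw [this]
    calc ‖(x - p) + t • u‖ ≤ ‖x - p‖ + ‖t • u‖ := norm_add_le _ _
      _ ≤ 2 * δ + T * ‖u‖ := by
          rw [norm_smul, Real.norm_eq_abs]
          have := mul_le_mul_of_nonneg_right ht (norm_nonneg u)
          linarith
      _ < R := hTR
  -- proportionality of the differentials on the ball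
  have hprop : ∀ x ∈ ball p R, ∀ w : E,
      fderiv ℝ f x w = (fderiv ℝ f x u / fderiv ℝ g x u) * fderiv ℝ g x w := by
    intro x hx w
    have hne := hb1' x hx
    have := hwedge x w u
    field_simp
    linarith [this]
  -- g is Kg-Lipschitz on the ball
  have hlip : ∀ x ∈ ball p R, ∀ y ∈ ball p R, |g x - g y| ≤ Kg * ‖x - y‖ := by
    intro x hx y hy
    have := (convex_ball p R).norm_image_sub_le_of_norm_fderiv_le
      (fun z _ => hgd z) (fun z hz => le_of_lt (hb2 z hz)) hy hx
    simpa [Real.norm_eq_abs] using this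
  -- derivative of g along lines in direction u
  have hHg : ∀ (x : E) (t : ℝ),
      HasDerivAt (fun s => g (x + s • u)) (fderiv ℝ g (x + t • u) u) t := by
    intro x t
    have hline : HasDerivAt (fun s : ℝ => x + s • u) u t := by
      simpa using ((hasDerivAt_id t).smul_const u).const_add x
    exact (hgd (x + t • u)).hasFDerivAt.comp_hasDerivAt t hline
  -- strict monotonicity along lines
  have hmono : ∀ x : E, ‖x - p‖ ≤ 2 * δ →
      StrictMonoOn (fun t => g (x + t • u)) (Icc (-T) T) := by
    intro x hx
    apply strictMonoOn_of_deriv_pos (convex_Icc _ _)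
    · exact (hg.continuous.comp (continuous_const.add (continuous_id.smul continuous_const))).continuousOn
    · intro t ht
      rw [interior_Icc] at ht
      rw [(hHg x t).deriv]
      have htT : |t| ≤ T := le_of_lt (abs_lt.2 ⟨ht.1, ht.2⟩)
      have := hb1 _ (hmem x t hx htT)
      linarith
  -- quantitative growth along lines
  have hgrow : ∀ x : E, ‖x - p‖ ≤ 2 * δ → ∀ t ∈ Icc (-T) T, ∀ t' ∈ Icc (-T) T,
      t ≤ t' → 1/2 * (t' - t) ≤ g (x + t' • u) - g (x + t • u) := by
    intro x hx
    apply (convex_Icc (-T) T).mul_sub_le_image_sub_of_le_deriv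
    · exact (hg.continuous.comp (continuous_const.add (continuous_id.smul continuous_const))).continuousOn
    · intro t ht
      rw [interior_Icc] at ht
      exact (hHg x t).differentiableAt.differentiableWithinAt
    · intro t ht
      rw [interior_Icc] at ht
      rw [(hHg x t).deriv]
      have htT : |t| ≤ T := le_of_lt (abs_lt.2 ⟨ht.1, ht.2⟩)
      exact le_of_lt (hb1 _ (hmem x t hx htT))
  -- existence of solutions g (x + t u) = c
  have hexists : ∀ x : E, ‖x - p‖ ≤ 2 * δ → ∀ c : ℝ, |c - g x| ≤ 3 * Kg * δ →
      ∃ t, |t| < T ∧ g (x + t • u) = c := by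
    intro x hx c hc
    have hTle : -T ≤ T := by linarith
    have h0 : (0:ℝ) ∈ Icc (-T) T := by constructor <;> linarith
    have hup : g x + T/2 ≤ g (x + T • u) := by
      have := hgrow x hx 0 h0 T ⟨hTle, le_refl T⟩ (le_of_lt hT0)
      simp only [zero_smul, add_zero] at this
      linarith
    have hdown : g (x + (-T) • u) ≤ g x - T/2 := by
      have := hgrow x hx (-T) ⟨le_refl _, hTle⟩ 0 h0 (by linarith)
      simp only [zero_smul, add_zero] at this
      linarith
    have habs := abs_le.1 hc
    have hKey : 3 * Kg * δ < T / 2 := by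
      rw [hT_def]; nlinarith
    have hcmem : c ∈ Ioo (g (x + (-T) • u)) (g (x + T • u)) := by
      constructor
      · linarith
      · linarith
    have hcont : ContinuousOn (fun t : ℝ => g (x + t • u)) (Icc (-T) T) :=
      (hg.continuous.comp (continuous_const.add (continuous_id.smul continuous_const))).continuousOn
    have := intermediate_value_Ioo hTle hcont hcmem
    rcases this with ⟨t, htmem, htval⟩
    exact ⟨t, abs_lt.2 ⟨htmem.1, htmem.2⟩, htval⟩
  -- uniqueness of solutions
  have huniq : ∀ x : E, ‖x - p‖ ≤ 2 * δ → ∀ t ∈ Icc (-T) T, ∀ t' ∈ Icc (-T) T,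
      g (x + t • u) = g (x + t' • u) → t = t' := by
    intro x hx t ht t' ht' hval
    exact (hmono x hx).injOn ht ht' hval
  ---------------------------------------------------------------------------
  -- Construction of the interval I and the function m
  ---------------------------------------------------------------------------
  have hpself : ‖p - p‖ ≤ 2 * δ := by simp; positivity
  set I : Set ℝ := Ioo (g (p + (-T) • u)) (g (p + T • u)) with hI_def
  have hIopen : IsOpen I := isOpen_Ioo
  have hmonop := hmono p hpself
  have hTmem : ∀ t : ℝ, |t| ≤ T → t ∈ Icc (-T) T := fun t ht => by
    rcases abs_le.1 ht with ⟨h1, h2⟩; exact ⟨h1, h2⟩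
  have hgpI : g p ∈ I := by
    have h1 : g (p + (-T) • u) < g (p + (0:ℝ) • u) :=
      hmonop ⟨le_refl _, by linarith⟩ ⟨by linarith, le_of_lt hT0⟩ (by linarith)
    have h2 : g (p + (0:ℝ) • u) < g (p + T • u) :=
      hmonop ⟨by linarith, le_of_lt hT0⟩ ⟨by linarith, le_refl _⟩ hT0
    simp only [zero_smul, add_zero] at h1 h2
    exact ⟨h1, h2⟩
  -- existence of σ
  have hσex : ∀ c ∈ I, ∃ t, t ∈ Ioo (-T) T ∧ g (p + t • u) = c := by
    intro c hc
    have hTle : -T ≤ T := by linarith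
    have hcont : ContinuousOn (fun t : ℝ => g (p + t • u)) (Icc (-T) T) :=
      (hg.continuous.comp (continuous_const.add (continuous_id.smul continuous_const))).continuousOn
    rcases intermediate_value_Ioo hTle hcont hc with ⟨t, htmem, htval⟩
    exact ⟨t, htmem, htval⟩
  set σ : ℝ → ℝ := fun c => if hc : c ∈ I then (hσex c hc).choose else 0 with hσ_def
  have hσmem : ∀ c ∈ I, σ c ∈ Ioo (-T) T := by
    intro c hc; rw [hσ_def]; simp only [dif_pos hc]; exact (hσex c hc).choose_spec.1
  have hσval : ∀ c ∈ I, g (p + σ c • u) = c := by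
    intro c hc; rw [hσ_def]; simp only [dif_pos hc]; exact (hσex c hc).choose_spec.2
  have hσuniq : ∀ c ∈ I, ∀ t ∈ Icc (-T) T, g (p + t • u) = c → t = σ c := by
    intro c hc t ht hval
    have h2 := hσmem c hc
    exact huniq p hpself t ht (σ c) ⟨le_of_lt h2.1, le_of_lt h2.2⟩
      (by rw [hval, hσval c hc])
  -- continuity of σ
  have hσcont : ∀ c₀ ∈ I, ContinuousAt σ c₀ := by
    intro c₀ hc₀
    have ht₀ := hσmem c₀ hc₀
    rw [ContinuousAt, Metric.tendsto_nhds]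
    intro ε hε
    set ε' : ℝ := min ε (min (T - σ c₀) (σ c₀ + T)) / 2 with hε'_def
    have hε'0 : 0 < ε' := by
      apply div_pos _ two_pos
      apply lt_min hε
      apply lt_min <;> linarith [ht₀.1, ht₀.2]
    have hε'ε : ε' < ε := by
      have h1 : min ε (min (T - σ c₀) (σ c₀ + T)) ≤ ε := min_le_left _ _
      rw [hε'_def]; linarith
    have hin1 : σ c₀ + ε' ∈ Icc (-T) T := by
      have h1 : ε' ≤ (T - σ c₀) / 2 := by
        rw [hε'_def]
        have := (min_le_right ε (min (T - σ c₀) (σ c₀ + T))).trans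
          (min_le_left (T - σ c₀) (σ c₀ + T))
        linarith
      constructor <;> [linarith [ht₀.1]; linarith [ht₀.2]]
    have hin2 : σ c₀ - ε' ∈ Icc (-T) T := by
      have h1 : ε' ≤ (σ c₀ + T) / 2 := by
        rw [hε'_def]
        have := (min_le_right ε (min (T - σ c₀) (σ c₀ + T))).trans
          (min_le_right (T - σ c₀) (σ c₀ + T))
        linarith
      constructor <;> [linarith [ht₀.1]; linarith [ht₀.2]]
    have ht₀Icc : σ c₀ ∈ Icc (-T) T := ⟨le_of_lt ht₀.1, le_of_lt ht₀.2⟩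
    have hlow : g (p + (σ c₀ - ε') • u) < c₀ := by
      have h3 : g (p + (σ c₀ - ε') • u) < g (p + σ c₀ • u) :=
        hmonop hin2 ht₀Icc (by linarith)
      rwa [hσval c₀ hc₀] at h3
    have hhigh : c₀ < g (p + (σ c₀ + ε') • u) := by
      have h3 : g (p + σ c₀ • u) < g (p + (σ c₀ + ε') • u) :=
        hmonop ht₀Icc hin1 (by linarith)
      rwa [hσval c₀ hc₀] at h3
    have hU : Ioo (g (p + (σ c₀ - ε') • u)) (g (p + (σ c₀ + ε') • u)) ∩ I ∈ nhds c₀ :=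
      (isOpen_Ioo.inter hIopen).mem_nhds ⟨⟨hlow, hhigh⟩, hc₀⟩
    filter_upwards [hU] with c hc
    rcases hc with ⟨⟨hc1, hc2⟩, hcI⟩
    have hσc := hσmem c hcI
    have hσcIcc : σ c ∈ Icc (-T) T := ⟨le_of_lt hσc.1, le_of_lt hσc.2⟩
    have hlt1 : σ c < σ c₀ + ε' := by
      by_contra hcon
      push_neg at hcon
      have h3 : g (p + (σ c₀ + ε') • u) ≤ g (p + σ c • u) :=
        hmonop.monotoneOn hin1 hσcIcc hcon
      rw [hσval c hcI] at h3
      linarith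
    have hlt2 : σ c₀ - ε' < σ c := by
      by_contra hcon
      push_neg at hcon
      have h3 : g (p + σ c • u) ≤ g (p + (σ c₀ - ε') • u) :=
        hmonop.monotoneOn hσcIcc hin2 hcon
      rw [hσval c hcI] at h3
      linarith
    rw [Real.dist_eq, abs_lt]
    constructor <;> linarith
  -- differentiability of σ
  have hσIcc : ∀ c ∈ I, σ c ∈ Icc (-T) T := fun c hc =>
    ⟨le_of_lt (hσmem c hc).1, le_of_lt (hσmem c hc).2⟩
  have hσball : ∀ c ∈ I, p + σ c • u ∈ ball p R := by
    intro c hc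
    exact hmem p (σ c) hpself (abs_le.2 (hσIcc c hc))
  have hσderiv : ∀ c ∈ I, HasDerivAt σ (fderiv ℝ g (p + σ c • u) u)⁻¹ c := by
    intro c hc
    apply HasDerivAt.of_local_left_inverse (hσcont c hc) (hHg p (σ c))
      (hb1' _ (hσball c hc))
    filter_upwards [hIopen.mem_nhds hc] with y hy
    exact hσval y hy
  set m : ℝ → ℝ := fun c => f (p + σ c • u) with hm_def
  have hmderiv : ∀ c ∈ I, HasDerivAt m
      ((fderiv ℝ g (p + σ c • u) u)⁻¹ * fderiv ℝ f (p + σ c • u) u) c := by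
    intro c hc
    have hline : HasDerivAt (fun c' => p + σ c' • u)
        ((fderiv ℝ g (p + σ c • u) u)⁻¹ • u) c :=
      ((hσderiv c hc).smul_const u).const_add p
    have := (hfd (p + σ c • u)).hasFDerivAt.comp_hasDerivAt c hline
    simpa [map_smul, smul_eq_mul, Function.comp_def, hm_def] using this
  -- m is C¹ on I
  have hmC1 : ContDiffOn ℝ 1 m I := by
    rw [show ((1 : WithTop ℕ∞)) = 0 + 1 by norm_num,
      contDiffOn_succ_iff_deriv_of_isOpen hIopen]
    refine ⟨fun c hc => (hmderiv c hc).differentiableAt.differentiableWithinAt,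
      by simp, ?_⟩
    rw [contDiffOn_zero]
    have hσcOn : ContinuousOn σ I := fun c hc => (hσcont c hc).continuousWithinAt
    have hxc : ContinuousOn (fun c => p + σ c • u) I :=
      continuousOn_const.add (hσcOn.smul continuousOn_const)
    have h1 : ContinuousOn (fun c => fderiv ℝ f (p + σ c • u) u) I :=
      (hfc.comp_continuousOn hxc).clm_apply continuousOn_const
    have h2 : ContinuousOn (fun c => (fderiv ℝ g (p + σ c • u) u)⁻¹) I := by
      apply ContinuousOn.inv₀ ((hgc.comp_continuousOn hxc).clm_apply continuousOn_const)
      intro c hc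
      exact hb1' _ (hσball c hc)
    apply ContinuousOn.congr (h2.mul h1)
    intro c hc
    exact (hmderiv c hc).deriv
  ---------------------------------------------------------------------------
  -- The factorization f = m ∘ g on the ball of radius δ
  ---------------------------------------------------------------------------
  refine ⟨ball p δ, ball_mem_nhds p hδ0, I, hIopen, ordConnected_Ioo, hgpI, m, hmC1, ?_⟩
  intro q hq
  set v : E := q - p with hv_def
  have hvδ : ‖v‖ < δ := by rwa [hv_def, ← mem_ball_iff_norm]
  set c : ℝ := g q with hc_def
  set J : Set ℝ := Ioo (-1 : ℝ) 2 with hJ_def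
  have hJopen : IsOpen J := isOpen_Ioo
  have hxs : ∀ s ∈ J, ‖(p + s • v) - p‖ ≤ 2 * δ := by
    intro s hs
    have habs : |s| ≤ 2 := by
      rcases hs with ⟨h1, h2⟩; rw [abs_le]; constructor <;> linarith
    have : p + s • v - p = s • v := by abel
    rw [this, norm_smul, Real.norm_eq_abs]
    nlinarith [norm_nonneg v, abs_nonneg s]
  have hq_ball : q ∈ ball p R := by
    rw [mem_ball_iff_norm]
    calc ‖q - p‖ < δ := hvδ
      _ < R := hδR
  have hxball : ∀ s ∈ J, p + s • v ∈ ball p R := by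
    intro s hs
    rw [mem_ball_iff_norm]
    calc ‖p + s • v - p‖ ≤ 2 * δ := hxs s hs
      _ < R := by nlinarith [mul_nonneg (le_of_lt hT0) (norm_nonneg u)]
  have hcs : ∀ s ∈ J, |c - g (p + s • v)| ≤ 3 * Kg * δ := by
    intro s hs
    have := hlip q hq_ball (p + s • v) (hxball s hs)
    have hnorm : ‖q - (p + s • v)‖ ≤ 2 * δ := by
      have heq : q - (p + s • v) = (1 - s) • v := by
        rw [hv_def]; rw [sub_smul, one_smul]; abel
      rw [heq, norm_smul, Real.norm_eq_abs]
      have habs : |1 - s| ≤ 2 := by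
        rcases hs with ⟨h1, h2⟩; rw [abs_le]; constructor <;> linarith
      nlinarith [norm_nonneg v, abs_nonneg (1 - s)]
    calc |c - g (p + s • v)| = |g q - g (p + s • v)| := by rw [hc_def]
      _ ≤ Kg * ‖q - (p + s • v)‖ := this
      _ ≤ Kg * (2 * δ) := by nlinarith
      _ ≤ 3 * Kg * δ := by nlinarith
  -- the implicit function τ
  have hτex : ∀ s ∈ J, ∃ t, |t| < T ∧ g ((p + s • v) + t • u) = c := fun s hs =>
    hexists (p + s • v) (hxs s hs) c (hcs s hs)
  set τ : ℝ → ℝ := fun s => if hs : s ∈ J then (hτex s hs).choose else 0 with hτ_def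
  have hτT : ∀ s ∈ J, |τ s| < T := by
    intro s hs; rw [hτ_def]; simp only [dif_pos hs]; exact (hτex s hs).choose_spec.1
  have hτval : ∀ s ∈ J, g ((p + s • v) + τ s • u) = c := by
    intro s hs; rw [hτ_def]; simp only [dif_pos hs]; exact (hτex s hs).choose_spec.2
  have hτIcc : ∀ s ∈ J, τ s ∈ Icc (-T) T := fun s hs => hTmem _ (le_of_lt (hτT s hs))
  have hτball : ∀ s ∈ J, (p + s • v) + τ s • u ∈ ball p R := fun s hs =>
    hmem (p + s • v) (τ s) (hxs s hs) (le_of_lt (hτT s hs))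
  -- continuity of τ
  have hτcont : ∀ s₀ ∈ J, ContinuousAt τ s₀ := by
    intro s₀ hs₀
    have ht₀ := abs_lt.1 (hτT s₀ hs₀)
    rw [ContinuousAt, Metric.tendsto_nhds]
    intro ε hε
    set ε' : ℝ := min ε (min (T - τ s₀) (τ s₀ + T)) / 2 with hε'_def
    have hε'0 : 0 < ε' := by
      apply div_pos _ two_pos
      apply lt_min hε
      apply lt_min <;> linarith [ht₀.1, ht₀.2]
    have hε'ε : ε' < ε := by
      have h1 : min ε (min (T - τ s₀) (τ s₀ + T)) ≤ ε := min_le_left _ _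
      rw [hε'_def]; linarith
    have hin1 : τ s₀ + ε' ∈ Icc (-T) T := by
      have h1 : ε' ≤ (T - τ s₀) / 2 := by
        rw [hε'_def]
        have := (min_le_right ε (min (T - τ s₀) (τ s₀ + T))).trans
          (min_le_left (T - τ s₀) (τ s₀ + T))
        linarith
      constructor <;> [linarith [ht₀.1]; linarith [ht₀.2]]
    have hin2 : τ s₀ - ε' ∈ Icc (-T) T := by
      have h1 : ε' ≤ (τ s₀ + T) / 2 := by
        rw [hε'_def]
        have := (min_le_right ε (min (T - τ s₀) (τ s₀ + T))).trans
          (min_le_right (T - τ s₀) (τ s₀ + T))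
        linarith
      constructor <;> [linarith [ht₀.1]; linarith [ht₀.2]]
    have hτ₀Icc := hτIcc s₀ hs₀
    have hmono₀ := hmono (p + s₀ • v) (hxs s₀ hs₀)
    have hlow₀ : g ((p + s₀ • v) + (τ s₀ - ε') • u) < c := by
      rw [← hτval s₀ hs₀]
      exact hmono₀ hin2 hτ₀Icc (by linarith)
    have hhigh₀ : c < g ((p + s₀ • v) + (τ s₀ + ε') • u) := by
      rw [← hτval s₀ hs₀]
      exact hmono₀ hτ₀Icc hin1 (by linarith)
    set U : Set ℝ := {s | s ∈ J ∧ g ((p + s • v) + (τ s₀ - ε') • u) < c ∧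
      c < g ((p + s • v) + (τ s₀ + ε') • u)} with hU_def
    have hUopen : IsOpen U := by
      apply IsOpen.inter hJopen
      apply IsOpen.inter
      · exact isOpen_lt (hg.continuous.comp ((continuous_const.add
          (continuous_id.smul continuous_const)).add continuous_const)) continuous_const
      · exact isOpen_lt continuous_const (hg.continuous.comp ((continuous_const.add
          (continuous_id.smul continuous_const)).add continuous_const))
    have hUs₀ : s₀ ∈ U := ⟨hs₀, hlow₀, hhigh₀⟩
    filter_upwards [hUopen.mem_nhds hUs₀] with s hs
    rcases hs with ⟨hsJ, hs1, hs2⟩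
    have hmonos := hmono (p + s • v) (hxs s hsJ)
    have hτsIcc := hτIcc s hsJ
    have hlt1 : τ s < τ s₀ + ε' := by
      by_contra hcon
      push_neg at hcon
      have := hmonos.monotoneOn hin1 hτsIcc hcon
      rw [hτval s hsJ] at this
      linarith
    have hlt2 : τ s₀ - ε' < τ s := by
      by_contra hcon
      push_neg at hcon
      have := hmonos.monotoneOn hτsIcc hin2 hcon
      rw [hτval s hsJ] at this
      linarith
    rw [Real.dist_eq, abs_lt]
    constructor <;> linarith
  -- differentiability of τ, and zero derivative of f along the implicit curve
  have hFderiv : ∀ s₀ ∈ J,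
      HasDerivAt (fun s => f ((p + s • v) + τ s • u)) 0 s₀ := by
    intro s₀ hs₀
    set x₀ : E := (p + s₀ • v) + τ s₀ • u with hx₀_def
    have hx₀ball : x₀ ∈ ball p R := hτball s₀ hs₀
    set a : ℝ := fderiv ℝ g x₀ v with ha_def
    set b : ℝ := fderiv ℝ g x₀ u with hb_def
    have hb : 1/2 < b := hb1 _ hx₀ball
    have hbne : b ≠ 0 := by linarith
    -- the 2D map Φ and its derivative
    set D : (ℝ × ℝ) →L[ℝ] E :=
      (ContinuousLinearMap.fst ℝ ℝ ℝ).smulRight v +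
      (ContinuousLinearMap.snd ℝ ℝ ℝ).smulRight u with hD_def
    have hDapply : ∀ z : ℝ × ℝ, D z = z.1 • v + z.2 • u := by
      intro z; simp [hD_def]
    set Φ : ℝ × ℝ → E := fun z => (p + z.1 • v) + z.2 • u with hΦ_def
    set z₀ : ℝ × ℝ := (s₀, τ s₀) with hz₀_def
    have hΦz₀ : Φ z₀ = x₀ := rfl
    have hΦderiv : HasStrictFDerivAt Φ D z₀ := by
      have h5 : HasStrictFDerivAt (fun z : ℝ × ℝ => p + D z) D z₀ :=
        D.hasStrictFDerivAt.const_add p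
      apply h5.congr_of_eventuallyEq
      apply Filter.Eventually.of_forall
      intro z
      show p + D z = (p + z.1 • v) + z.2 • u
      rw [hDapply]; abel
    -- strict derivative of g at x₀
    have hgstrict : HasStrictFDerivAt g (fderiv ℝ g x₀) (Φ z₀) :=
      (hg.contDiffAt).hasStrictFDerivAt one_ne_zero
    have hG : HasStrictFDerivAt (fun z : ℝ × ℝ => g (Φ z))
        ((fderiv ℝ g x₀).comp D) z₀ := hgstrict.comp z₀ hΦderiv
    -- the map Ψ and the equivalence
    set L : (ℝ × ℝ) →L[ℝ] (ℝ × ℝ) :=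
      (ContinuousLinearMap.fst ℝ ℝ ℝ).prod ((fderiv ℝ g x₀).comp D) with hL_def
    have hLapply : ∀ z : ℝ × ℝ, L z = (z.1, z.1 * a + z.2 * b) := by
      intro z
      simp [hL_def, hDapply, ha_def, hb_def, map_add, map_smul, smul_eq_mul, mul_comm]
    set L' : (ℝ × ℝ) →L[ℝ] (ℝ × ℝ) :=
      (ContinuousLinearMap.fst ℝ ℝ ℝ).prod
        (b⁻¹ • (ContinuousLinearMap.snd ℝ ℝ ℝ) - (b⁻¹ * a) • (ContinuousLinearMap.fst ℝ ℝ ℝ))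
      with hL'_def
    have hL'apply : ∀ z : ℝ × ℝ, L' z = (z.1, b⁻¹ * z.2 - b⁻¹ * a * z.1) := by
      intro z; simp [hL'_def]
    have hLL' : Function.LeftInverse L' L := by
      intro z
      rw [hLapply, hL'apply]
      have h6 : b⁻¹ * (z.1 * a + z.2 * b) - b⁻¹ * a * z.1 = z.2 := by
        field_simp; ring
      simp only [h6]
    have hL'L : Function.RightInverse L' L := by
      intro z
      rw [hL'apply, hLapply]
      have h6 : z.1 * a + (b⁻¹ * z.2 - b⁻¹ * a * z.1) * b = z.2 := by
        field_simp; ring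
      simp only [h6]
    set e : (ℝ × ℝ) ≃L[ℝ] (ℝ × ℝ) :=
      ContinuousLinearEquiv.equivOfInverse L L' hLL' hL'L with he_def
    have hecoe : (e : (ℝ × ℝ) →L[ℝ] (ℝ × ℝ)) = L := rfl
    set Ψ : ℝ × ℝ → ℝ × ℝ := fun z => (z.1, g (Φ z)) with hΨ_def
    have hΨderiv : HasStrictFDerivAt Ψ (e : (ℝ × ℝ) →L[ℝ] (ℝ × ℝ)) z₀ := by
      rw [hecoe, hL_def]
      exact (hasStrictFDerivAt_fst).prodMk hG
    set inv : ℝ × ℝ → ℝ × ℝ := hΨderiv.localInverse Ψ e z₀ with hinv_def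
    have hΨz₀ : Ψ z₀ = (s₀, c) := by
      have h7 : g x₀ = c := by simpa [hx₀_def] using hτval s₀ hs₀
      show ((z₀.1, g (Φ z₀)) : ℝ × ℝ) = (s₀, c)
      rw [hΦz₀, h7, hz₀_def]
    -- τ agrees with the local inverse
    have hcurve : ContinuousAt (fun s => ((s, τ s) : ℝ × ℝ)) s₀ :=
      continuousAt_id.prodMk (hτcont s₀ hs₀)
    have hleft : ∀ᶠ z in nhds z₀, inv (Ψ z) = z := hΨderiv.eventually_left_inverse
    have heq : ∀ᶠ s in nhds s₀, inv (s, c) = (s, τ s) := by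
      have h2 : ∀ᶠ s in nhds s₀, inv (Ψ (s, τ s)) = (s, τ s) := hcurve.eventually hleft
      filter_upwards [h2, hJopen.mem_nhds hs₀] with s hs hsJ
      have : Ψ (s, τ s) = (s, c) := by
        rw [hΨ_def]; exact congrArg _ (hτval s hsJ)
      rwa [this] at hs
    -- derivative of τ
    have hinvderiv : HasStrictFDerivAt inv
        (e.symm : (ℝ × ℝ) →L[ℝ] (ℝ × ℝ)) (s₀, c) := by
      have := hΨderiv.to_localInverse
      rwa [hΨz₀] at this
    have hlineder : HasDerivAt (fun s : ℝ => ((s, c) : ℝ × ℝ)) ((1 : ℝ), (0 : ℝ)) s₀ :=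
      (hasDerivAt_id s₀).prodMk (hasDerivAt_const s₀ c)
    have hinv2 : HasDerivAt (fun s => inv (s, c)) (e.symm (1, 0)) s₀ :=
      by have := hinvderiv.hasFDerivAt.comp_hasDerivAt s₀ hlineder; simpa [Function.comp_def] using this
    have hsnd : HasDerivAt (fun s => (inv (s, c)).2) ((e.symm (1, 0)).2) s₀ :=
      (ContinuousLinearMap.snd ℝ ℝ ℝ).hasFDerivAt.comp_hasDerivAt s₀ hinv2
    set d : ℝ := (e.symm (1, 0)).2 with hd_def
    have hτderiv : HasDerivAt τ d s₀ := by
      apply hsnd.congr_of_eventuallyEq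
      filter_upwards [heq] with s hs
      rw [hs]
    -- the curve s ↦ p + s v + τ(s) u and its derivative
    have hcurved : HasDerivAt (fun s => (p + s • v) + τ s • u) (v + d • u) s₀ := by
      have h1 : HasDerivAt (fun s : ℝ => p + s • v) v s₀ := by
        simpa using ((hasDerivAt_id s₀).smul_const v).const_add p
      exact h1.add (hτderiv.smul_const u)
    -- g along the curve is constant, giving a + d b = 0
    have hgcurve : HasDerivAt (fun s => g ((p + s • v) + τ s • u))
        (fderiv ℝ g x₀ (v + d • u)) s₀ := by
      have := (hgd x₀).hasFDerivAt.comp_hasDerivAt s₀ hcurved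
      exact this
    have hgconst : HasDerivAt (fun s => g ((p + s • v) + τ s • u)) 0 s₀ := by
      apply (hasDerivAt_const s₀ c).congr_of_eventuallyEq
      filter_upwards [hJopen.mem_nhds hs₀] with s hs
      exact hτval s hs
    have hzero : fderiv ℝ g x₀ (v + d • u) = 0 := hgcurve.unique hgconst
    -- f along the curve has zero derivative
    have hfcurve : HasDerivAt (fun s => f ((p + s • v) + τ s • u))
        (fderiv ℝ f x₀ (v + d • u)) s₀ :=
      (hfd x₀).hasFDerivAt.comp_hasDerivAt s₀ hcurved
    have hfzero : fderiv ℝ f x₀ (v + d • u) = 0 := by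
      rw [hprop x₀ hx₀ball (v + d • u), hzero, mul_zero]
    rwa [hfzero] at hfcurve
  -- constancy of f along the curve
  set F : ℝ → ℝ := fun s => f ((p + s • v) + τ s • u) with hF_def
  have hJconv : Convex ℝ J := convex_Ioo _ _
  have h0J : (0 : ℝ) ∈ J := by constructor <;> norm_num
  have h1J : (1 : ℝ) ∈ J := by constructor <;> norm_num
  have hF01 : F 1 = F 0 := by
    have hwithin : ∀ s ∈ J, HasDerivWithinAt F 0 J s := fun s hs =>
      (hFderiv s hs).hasDerivWithinAt
    have := hJconv.norm_image_sub_le_of_norm_hasDerivWithin_le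
      (C := 0) (f' := fun _ => (0 : ℝ)) hwithin (fun s _ => by simp) h0J h1J
    simp only [norm_zero, zero_mul] at this
    have h0 : ‖F 1 - F 0‖ ≤ 0 := by simpa using this
    have := norm_le_zero_iff.1 h0
    linarith [sub_eq_zero.1 this]
  -- τ 1 = 0
  have hτ1 : τ 1 = 0 := by
    have h1 : g ((p + (1:ℝ) • v) + τ 1 • u) = c := hτval 1 h1J
    have h2 : g ((p + (1:ℝ) • v) + (0:ℝ) • u) = c := by
      rw [hc_def]
      congr 1
      rw [hv_def]; simp
    exact huniq (p + (1:ℝ) • v) (hxs 1 h1J) (τ 1) (hτIcc 1 h1J) 0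
      ⟨by linarith, by linarith⟩ (h1.trans h2.symm)
  -- conclude
  have hcI : c ∈ I := by
    have hτ0 := hτIcc 0 h0J
    have hτ0mem := hτT 0 h0J
    have hval : g (p + τ 0 • u) = c := by
      have := hτval 0 h0J
      simpa using this
    rcases abs_lt.1 hτ0mem with ⟨hl, hr⟩
    have h1 : g (p + (-T) • u) < g (p + τ 0 • u) :=
      hmonop ⟨le_refl _, by linarith⟩ hτ0 hl
    have h2 : g (p + τ 0 • u) < g (p + T • u) :=
      hmonop hτ0 ⟨by linarith, le_refl _⟩ hr
    rw [hval] at h1 h2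
    exact ⟨h1, h2⟩
  have hστ0 : τ 0 = σ c := by
    apply hσuniq c hcI (τ 0) (hτIcc 0 h0J)
    have := hτval 0 h0J
    simpa using this
  have hF1 : F 1 = f q := by
    rw [hF_def]
    simp only [hτ1]
    rw [hv_def]; simp
  have hF0 : F 0 = m c := by
    rw [hF_def, hm_def]
    simp only [hστ0]
    congr 1
    simp
  rw [hc_def] at hF0
  rw [← hF1, hF01, hF0]
end

section
/- Let ρ : U → ℝ be a C² function on an open set U ⊆ ℂ², with coordinates (z, w), w = u + iv, and suppose the function β(z,w) = v · ρ(z,w) is plurisubharmonic on U. Then at every point p = (z, u + i·0) ∈ U with v(p) = 0, the partial derivatives ∂ρ/∂z(p) and ∂ρ/∂z̄(p) vanish. -/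
open Complex

noncomputable def mIm : (ℂ × ℂ) →L[ℝ] ℝ :=
  Complex.imCLM.comp (ContinuousLinearMap.snd ℝ ℂ ℂ)

@[simp] lemma mIm_apply (q : ℂ × ℂ) : mIm q = (q.2).im := rfl

lemma aux_fderiv_beta (U : Set (ℂ × ℂ)) (hU : IsOpen U)
    (ρ : ℂ × ℂ → ℝ) (hρ : ContDiffOn ℝ 2 ρ U) (q : ℂ × ℂ) (hq : q ∈ U) :
    fderiv ℝ (fun p => (p.2).im * ρ p) q
      = (q.2).im • fderiv ℝ ρ q + (ρ q) • mIm := by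
  have hdρ : DifferentiableAt ℝ ρ q :=
    (hρ.differentiableOn (by norm_num)).differentiableAt (hU.mem_nhds hq)
  have h : HasFDerivAt (fun p => mIm p * ρ p)
      (mIm q • fderiv ℝ ρ q + ρ q • mIm) q :=
    (mIm.hasFDerivAt).mul hdρ.hasFDerivAt
  simpa using h.fderiv

lemma aux_second (U : Set (ℂ × ℂ)) (hU : IsOpen U)
    (ρ : ℂ × ℂ → ℝ) (hρ : ContDiffOn ℝ 2 ρ U)
    (p : ℂ × ℂ) (hp : p ∈ U) (hv0 : (p.2).im = 0) (v : ℂ × ℂ) :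
    fderiv ℝ (fun q => fderiv ℝ (fun r => (r.2).im * ρ r) q v) p v
      = 2 * v.2.im * fderiv ℝ ρ p v := by
  have hev : (fun q => fderiv ℝ (fun r => (r.2).im * ρ r) q v)
      =ᶠ[nhds p] (fun q => (q.2).im * fderiv ℝ ρ q v + v.2.im * ρ q) := by
    filter_upwards [hU.mem_nhds hp] with q hq
    rw [aux_fderiv_beta U hU ρ hρ q hq]
    simp [mul_comm]
  have hD1 : ContDiffOn ℝ 1 (fderiv ℝ ρ) U := hρ.fderiv_of_isOpen hU (by norm_num)
  have hDv : DifferentiableAt ℝ (fun q => fderiv ℝ ρ q v) p :=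
    ((hD1.differentiableOn one_ne_zero).differentiableAt (hU.mem_nhds hp)).clm_apply
      (differentiableAt_const v)
  have hdρ : DifferentiableAt ℝ ρ p :=
    (hρ.differentiableOn (by norm_num)).differentiableAt (hU.mem_nhds hp)
  have h1 : HasFDerivAt (fun q => (q.2).im * fderiv ℝ ρ q v)
      (mIm p • fderiv ℝ (fun q => fderiv ℝ ρ q v) p + (fderiv ℝ ρ p v) • mIm) p :=
    (mIm.hasFDerivAt).mul hDv.hasFDerivAt
  have h2 : HasFDerivAt (fun q => v.2.im * ρ q) (v.2.im • fderiv ℝ ρ p) p :=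
    hdρ.hasFDerivAt.const_mul v.2.im
  have h3 := (show HasFDerivAt (fun q => (q.2).im * fderiv ℝ ρ q v + v.2.im * ρ q) _ p
    from h1.add h2).fderiv
  rw [hev.fderiv_eq, h3]
  simp [hv0]
  ring

lemma aux_levi (U : Set (ℂ × ℂ)) (hU : IsOpen U)
    (ρ : ℂ × ℂ → ℝ) (hρ : ContDiffOn ℝ 2 ρ U)
    (p : ℂ × ℂ) (hp : p ∈ U) (hv0 : (p.2).im = 0) (v : ℂ × ℂ) :
    leviForm (fun r => (r.2).im * ρ r) p v
      = 2 * v.2.im * fderiv ℝ ρ p v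
        + 2 * (Complex.I • v).2.im * fderiv ℝ ρ p (Complex.I • v) := by
  unfold leviForm
  rw [aux_second U hU ρ hρ p hp hv0 v, aux_second U hU ρ hρ p hp hv0 (Complex.I • v)]

lemma nonneg_affine {A C : ℝ} (h : ∀ s : ℝ, 0 ≤ s * A + C) : A = 0 := by
  by_contra hA
  have := h ((-C - 1) / A)
  rw [div_mul_cancel₀ _ hA] at this
  linarith

/-- If `ρ` is `C²` on an open set `U ⊆ ℂ²` (coordinates `(z,w)`,
`w = u + iv`) and `β(z,w) = v·ρ(z,w)` is plurisubharmonic on `U`, then on the hypersurface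
`{v = 0}` the derivatives `∂ρ/∂z` and `∂ρ/∂z̄` vanish. -/
theorem stmt_15 (U : Set (ℂ × ℂ)) (hU : IsOpen U)
    (ρ : ℂ × ℂ → ℝ) (hρ : ContDiffOn ℝ 2 ρ U)
    (β : ℂ × ℂ → ℝ) (hβ : β = fun p => (p.2).im * ρ p)
    (hpsh : ∀ p ∈ U, ∀ v : ℂ × ℂ, 0 ≤ leviForm β p v) :
    ∀ p ∈ U, (p.2).im = 0 →
      ((fderiv ℝ ρ p ((1 : ℂ), (0 : ℂ)) : ℂ)
          - Complex.I * (fderiv ℝ ρ p ((Complex.I : ℂ), (0 : ℂ)) : ℂ)) / 2 = 0 ∧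
      ((fderiv ℝ ρ p ((1 : ℂ), (0 : ℂ)) : ℂ)
          + Complex.I * (fderiv ℝ ρ p ((Complex.I : ℂ), (0 : ℂ)) : ℂ)) / 2 = 0 := by
  intro p hp hv0
  subst hβ
  have key : ∀ v : ℂ × ℂ,
      0 ≤ 2 * v.2.im * fderiv ℝ ρ p v
        + 2 * (Complex.I • v).2.im * fderiv ℝ ρ p (Complex.I • v) := by
    intro v
    rw [← aux_levi U hU ρ hρ p hp hv0 v]
    exact hpsh p hp v
  set D := fderiv ℝ ρ p with hD
  have hA : D ((1:ℂ), (0:ℂ)) = 0 := by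
    apply nonneg_affine (C := D ((0:ℂ), Complex.I))
    intro s
    have h := key ((s : ℂ), Complex.I)
    have e1 : ((s : ℂ), Complex.I) = s • ((1:ℂ), (0:ℂ)) + ((0:ℂ), Complex.I) := by
      ext <;> simp [Complex.real_smul]
    have e2 : (Complex.I • (((s:ℂ)), Complex.I) : ℂ × ℂ).2.im = 0 := by
      simp [Complex.I_mul_I]
    rw [e2] at h
    rw [e1, map_add, map_smul] at h
    have e3 : (s • ((1:ℂ), (0:ℂ)) + ((0:ℂ), Complex.I) : ℂ × ℂ).2.im = 1 := by simp
    rw [e3] at h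
    simp only [smul_eq_mul, Complex.one_im] at h ⊢
    linarith
  have hB : D ((Complex.I : ℂ), (0:ℂ)) = 0 := by
    apply nonneg_affine (C := D ((0:ℂ), Complex.I))
    intro s
    have h := key ((s : ℂ), (1:ℂ))
    have e2 : (Complex.I • (((s:ℂ)), (1:ℂ)) : ℂ × ℂ)
        = s • ((Complex.I : ℂ), (0:ℂ)) + ((0:ℂ), Complex.I) := by
      ext <;> simp [Complex.real_smul] <;> ring
    rw [e2, map_add, map_smul] at h
    have e3 : (s • ((Complex.I : ℂ), (0:ℂ)) + ((0:ℂ), Complex.I) : ℂ × ℂ).2.im = 1 := by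
      simp
    rw [e3] at h
    simp only [smul_eq_mul, Complex.one_im] at h ⊢
    linarith
  rw [hA, hB]
  norm_num
end
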